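/- For every computably bounded numbering φ, the set MIN_φ is immune: MIN_φ is infinite and has no infinite computably enumerable subset. -/

import Mathlib

/-- A numbering: a family of partial functions `φ_e : ℕ →. ℕ` such that the
two-variable map `(e, x) ↦ φ_e x` is partial recursive. -/
def Numbering' (φ : ℕ → ℕ →. ℕ) : Prop := Partrec₂ φ

/-- `φ` is acceptable: every numbering translates into it via a computable function. -/
def Acceptable (φ : ℕ → ℕ →. ℕ) : Prop :=
  ∀ ψ : ℕ → ℕ →. ℕ, Numbering' ψ → ∃ f : ℕ → ℕ, Computable f ∧ ∀ e, φ (f e) = ψ e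

/-- `φ` has the Kolmogorov property: every numbering translates into it with
linearly bounded (not necessarily computable) translation. -/
def KolmogorovProperty (φ : ℕ → ℕ →. ℕ) : Prop :=
  ∀ ψ : ℕ → ℕ →. ℕ, Numbering' ψ → ∃ c : ℕ, ∀ e, ∃ j, j ≤ c * e + c ∧ φ j = ψ e

/-- `φ` is computably bounded: every numbering translates into it with a
computable bound on the translated index. -/
def ComputablyBounded (φ : ℕ → ℕ →. ℕ) : Prop :=
  ∀ ψ : ℕ → ℕ →. ℕ, Numbering' ψ → ∃ f : ℕ → ℕ, Computable f ∧ ∀ e, ∃ j, j ≤ f e ∧ φ j = ψ e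

/-- `φ` is polynomially bounded with degree `p`. -/
def PolyBounded (φ : ℕ → ℕ →. ℕ) (p : ℕ) : Prop :=
  ∀ ψ : ℕ → ℕ →. ℕ, Numbering' ψ → ∃ c : ℕ, ∀ e, ∃ j, j ≤ c * e ^ p + c ∧ φ j = ψ e

/-- The set of `φ`-minimal indices. -/
def MINset (φ : ℕ → ℕ →. ℕ) : Set ℕ := {e | ∀ j < e, φ j ≠ φ e}

/-- Minimal indices of functions converging exactly on input 0. -/
def Mset (φ : ℕ → ℕ →. ℕ) : Set ℕ :=
  {e | e ∈ MINset φ ∧ (φ e 0).Dom ∧ ∀ x ≥ 1, ¬ (φ e x).Dom}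

/-- `minIndex φ e` is the minimal index computing the same function as `e`. -/
noncomputable def minIndex (φ : ℕ → ℕ →. ℕ) (e : ℕ) : ℕ := sInf {j | φ j = φ e}

/-- A partial recursive `U` is optimal: every partial recursive `V` is simulated
with only linear increase of programs. -/
def OptimalMachine (U : ℕ →. ℕ) : Prop :=
  Nat.Partrec U ∧ ∀ V : ℕ →. ℕ, Nat.Partrec V →
    ∃ c : ℕ, ∀ p, (V p).Dom → ∃ q, q ≤ c * p + c ∧ U q = V p

/-- Kolmogorov complexity of `x` with respect to `U`: the least binary length of
a `U`-program for `x`. (`Nat.size q` is the binary length of `q`.) -/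
noncomputable def Cpx (U : ℕ →. ℕ) (x : ℕ) : ℕ :=
  sInf {n | ∃ q, U q = Part.some x ∧ Nat.size q = n}

/-- Kolmogorov complexity of (the canonical code of) a finite set. -/
noncomputable def CpxFinset (U : ℕ →. ℕ) (A : Finset ℕ) : ℕ :=
  Cpx U (Encodable.encode A)

/-- `A` is `(m,k)`-recursive: a computable labelling of `k`-tuples that is
correct in at least `m` coordinates on every tuple. -/
def MKRecursive (m k : ℕ) (A : Set ℕ) : Prop :=
  ∃ f : (Fin k → ℕ) → Fin k → Bool, Computable f ∧
    ∀ x : Fin k → ℕ, m ≤ {i : Fin k | (f x i = true ↔ x i ∈ A)}.ncard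

/-!
Since every numbering embeds into `φ`, the range of `φ` contains all constant functions and is
infinite; the least index of each function in the range is minimal, so `MIN_φ` is infinite.
If the domain `W` of `g` were an infinite subset of `MIN_φ`, dovetailing would compute, from any
`b`, some `w ∈ W` with `b < w`. The numbering `ψ_c = φ_w`, `w` the element of `W` found above
the output of program `c` on `c`, has a computable bound `f`; at a code `c` of `f` it yields
`j ≤ f c < w` with `φ_j = φ_w`, contradicting the minimality of `w`.
-/

open Nat.Partrec (Code)
open Nat.Partrec.Code

theorem Nat.Partrec.exists_search_dom {α : Type*} [Primcodable α] {g : ℕ →. ℕ}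
    (hg : Nat.Partrec g) {r : α → ℕ → Bool} (hr : Computable₂ r) :
    ∃ s : α →. ℕ, Partrec s ∧ ∀ a,
      (∀ w ∈ s a, r a w ∧ (g w).Dom) ∧ ((∃ w, r a w ∧ (g w).Dom) → (s a).Dom) := by
  obtain ⟨cg, rfl⟩ := exists_code.1 hg
  -- dovetailing: `k` codes a candidate `w` together with a step budget `t`
  let test : α → ℕ → Bool := fun a k => r a k.unpair.1 && (evaln k.unpair.2 cg k.unpair.1).isSome
  have htest : Computable₂ test :=
    Primrec.and.to_comp.comp
      (hr.comp Computable.fst (Computable.fst.comp (Computable.unpair.comp Computable.snd)))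
      (Primrec.option_isSome.to_comp.comp (primrec_evaln.to_comp.comp
        (((Computable.snd.comp (Computable.unpair.comp Computable.snd)).pair
          (Computable.const cg)).pair
          (Computable.fst.comp (Computable.unpair.comp Computable.snd)))))
  refine ⟨fun a => Nat.rfindOpt fun k => bif test a k then some k.unpair.1 else Option.none,
    Partrec.rfindOpt (Computable.cond htest
      (Computable.option_some.comp (Computable.fst.comp (Computable.unpair.comp Computable.snd)))
      (Computable.const Option.none)), fun a => ⟨?_, ?_⟩⟩
  · intro w hw
    obtain ⟨k, hk⟩ := Nat.rfindOpt_spec hw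
    cases htk : test a k <;> simp only [htk, cond_false, cond_true, Option.mem_def,
      reduceCtorEq, Option.some.injEq] at hk
    obtain ⟨hrw, hev⟩ := Bool.and_eq_true_iff.1 htk
    obtain ⟨y, hy⟩ := Option.isSome_iff_exists.1 hev
    subst hk
    exact ⟨hrw, Part.dom_iff_mem.2 ⟨y, evaln_sound hy⟩⟩
  · rintro ⟨w, hrw, hw⟩
    obtain ⟨y, hy⟩ := Part.dom_iff_mem.1 hw
    obtain ⟨t, ht⟩ := evaln_complete.1 hy
    refine Nat.rfindOpt_dom.2 ⟨Nat.pair w t, w, ?_⟩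
    simp [test, hrw, Option.mem_def.1 ht]

section MINset

variable {φ : ℕ → ℕ →. ℕ}

theorem le_of_mem_MINset {e j : ℕ} (he : e ∈ MINset φ) (hj : φ j = φ e) : e ≤ j :=
  not_lt.1 fun hlt => he j hlt hj

theorem image_MINset (φ : ℕ → ℕ →. ℕ) : φ '' MINset φ = Set.range φ := by
  classical
  refine (Set.image_subset_range _ _).antisymm ?_
  rintro _ ⟨e, rfl⟩
  have hex : ∃ j, φ j = φ e := ⟨e, rfl⟩
  refine ⟨Nat.find hex, fun j hj hje => Nat.find_min hex hj (hje.trans (Nat.find_spec hex)),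
    Nat.find_spec hex⟩

theorem MINset_infinite_of_range_infinite (h : (Set.range φ).Infinite) : (MINset φ).Infinite :=
  Set.Infinite.of_image φ (image_MINset φ ▸ h)

end MINset

namespace ComputablyBounded

variable {φ : ℕ → ℕ →. ℕ}

theorem range_infinite (hcb : ComputablyBounded φ) : (Set.range φ).Infinite := by
  have hconst : Numbering' fun e (_ : ℕ) => Part.some e := Computable.fst
  obtain ⟨_, -, hf⟩ := hcb _ hconst
  refine Set.infinite_of_injective_forall_mem (f := fun e (_ : ℕ) => Part.some e)
    (fun e e' h => Part.some_injective (congrFun h 0)) fun e => ?_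
  obtain ⟨j, -, hj⟩ := hf e
  exact ⟨j, hj⟩

theorem exists_index_le (hφ : Numbering' φ) (hcb : ComputablyBounded φ) {s : ℕ →. ℕ}
    (hs : Partrec s) (hdom : ∀ b, (s b).Dom) : ∃ b, ∃ w ∈ s b, ∃ j ≤ b, φ j = φ w := by
  -- `ψ c` runs the program `c` on itself and follows `s`; diagonalise at a program for the bound
  let ψ : ℕ → ℕ →. ℕ := fun c x =>
    ((eval (Denumerable.ofNat Code c) c).bind fun b => s b).bind fun w => φ w x
  have hψ : Partrec₂ ψ :=
    ((eval_part.comp ((Computable.ofNat Code).comp Computable.fst) Computable.fst).bind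
      (hs.comp Computable.snd).to₂).bind
      (hφ.comp Computable.snd (Computable.snd.comp Computable.fst)).to₂
  obtain ⟨f, hf, hbound⟩ := hcb ψ hψ
  obtain ⟨cf, hcf⟩ := exists_code.1 (Partrec.nat_iff.1 hf.partrec)
  obtain ⟨w, hw⟩ := Part.dom_iff_mem.1 (hdom (f (Encodable.encode cf)))
  obtain ⟨j, hj, hjψ⟩ := hbound (Encodable.encode cf)
  refine ⟨f (Encodable.encode cf), w, hw, j, hj, hjψ.trans ?_⟩
  funext x
  simp only [ψ, Denumerable.ofNat_encode, hcf, PFun.coe_val]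
  rw [Part.bind_some, Part.eq_some_iff.2 hw, Part.bind_some]

theorem MINset_immune (hφ : Numbering' φ) (hcb : ComputablyBounded φ) {g : ℕ →. ℕ}
    (hg : Nat.Partrec g) (hsub : g.Dom ⊆ MINset φ) : g.Dom.Finite := by
  by_contra hinf
  obtain ⟨s, hs, hspec⟩ := hg.exists_search_dom (r := fun b w => decide (b < w))
    (Primrec.nat_lt.decide.to_comp)
  have hdom (b : ℕ) : (s b).Dom := by
    obtain ⟨w, hw, hbw⟩ := Set.Infinite.exists_gt hinf b
    exact (hspec b).2 ⟨w, decide_eq_true hbw, hw⟩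
  obtain ⟨b, w, hw, j, hjb, hj⟩ := exists_index_le hφ hcb hs hdom
  obtain ⟨hbw, hwg⟩ := (hspec b).1 w hw
  exact (of_decide_eq_true hbw).not_ge ((le_of_mem_MINset (hsub hwg) hj).trans hjb)

end ComputablyBounded

/-- For every computably bounded numbering, `MIN_φ` is immune: it is infinite
and has no infinite computably enumerable subset. -/
theorem MIN_immune
    (φ : ℕ → ℕ →. ℕ) (hφ : Numbering' φ) (hcb : ComputablyBounded φ) :
    (MINset φ).Infinite ∧
      ∀ g : ℕ →. ℕ, Nat.Partrec g → g.Dom ⊆ MINset φ → g.Dom.Finite :=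
  ⟨MINset_infinite_of_range_infinite hcb.range_infinite,
    fun _ hg hsub => hcb.MINset_immune hφ hg hsub⟩
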